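/- arXiv:2311.11960 — 6 statements merged into one kernel-verified Lean document; each statement's English description precedes it below -/
import Mathlib

section
/- Let (X,d) be a metric space and ξ a doubling gauge function on balls, i.e., there exists D ≥ 1 such that for any two balls B', B with B' ∩ B ≠ ∅ and rad(B') ≤ rad(B) ≤ 2 rad(B'), one has D⁻¹ ξ(B') ≤ ξ(B) ≤ D ξ(B'). Suppose X is metrically doubling. Then for every τ ≥ 1 there exists a constant C(τ) > 0, depending only on D and the metric doubling constant, such that for every set K ⊂ X and every r > 0, the ξ-Hausdorff content at scale r satisfies H^ξ_r(K) ≤ C(τ) · H^ξ_{τr}(K). -/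
open Metric Set MeasureTheory ENNReal

noncomputable section

namespace Paper

variable {X : Type*}

/-- The subcollection of balls (center, radius pairs) whose ball meets `A`. -/
def restr [MetricSpace X] (C : Set (X × ℝ)) (A : Set X) : Set (X × ℝ) :=
  {B ∈ C | (Metric.ball B.1 B.2 ∩ A).Nonempty}

/-- Total gauge mass of a collection of balls. -/
def gaugeSum (ξ : X → ℝ → ℝ≥0∞) (C : Set (X × ℝ)) : ℝ≥0∞ :=
  ∑' B : C, ξ (B : X × ℝ).1 (B : X × ℝ).2

/-- Hausdorff content at scale `r` with respect to a gauge `ξ`. -/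
def gaugeContent [MetricSpace X] (ξ : X → ℝ → ℝ≥0∞) (r : ℝ) (A : Set X) : ℝ≥0∞ :=
  ⨅ (C : Set (X × ℝ)) (_ : C.Countable) (_ : ∀ B ∈ C, 0 < B.2 ∧ B.2 ≤ r)
    (_ : A ⊆ ⋃ B ∈ C, Metric.ball B.1 B.2), gaugeSum ξ C

/-- A doubling gauge function with constant `D`. -/
def DoublingGauge [MetricSpace X] (ξ : X → ℝ → ℝ≥0∞) (D : ℝ≥0∞) : Prop :=
  (∀ (x : X) (r : ℝ), 0 < r → 0 < ξ x r ∧ ξ x r < ⊤) ∧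
  ∀ (x x' : X) (r r' : ℝ), 0 < r' → r' ≤ r → r ≤ 2 * r' →
    (Metric.ball x' r' ∩ Metric.ball x r).Nonempty →
    ξ x' r' ≤ D * ξ x r ∧ ξ x r ≤ D * ξ x' r'

/-- `X` is metrically `N`-doubling: every ball of radius `r` contains at most `N`
pairwise `r/2`-separated points. -/
def MetricDoubling (X : Type*) [MetricSpace X] (N : ℕ) : Prop :=
  ∀ (x : X) (r : ℝ) (S : Finset X), (↑S ⊆ Metric.ball x r) →
    (∀ y ∈ S, ∀ z ∈ S, y ≠ z → r / 2 ≤ dist y z) → S.card ≤ N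

/-- `μ` is a doubling measure with constant `D`. -/
def DoublingMeasure [MetricSpace X] [MeasurableSpace X] (μ : Measure X) (D : ℝ≥0∞) : Prop :=
  ∀ (x : X) (r : ℝ), 0 < r →
    0 < μ (Metric.ball x r) ∧ μ (Metric.ball x r) < ⊤ ∧
    μ (Metric.ball x (2 * r)) ≤ D * μ (Metric.ball x r)

/-- The codimension-`q` gauge `h_q(B) = μ(B)/rad(B)^q`. -/
def hGauge [MetricSpace X] [MeasurableSpace X] (μ : Measure X) (q : ℝ) (x : X) (r : ℝ) : ℝ≥0∞ :=
  μ (Metric.ball x r) / ENNReal.ofReal (r ^ q)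

/-- Total `h_q` mass of a collection of balls. -/
def hSum [MetricSpace X] [MeasurableSpace X] (μ : Measure X) (q : ℝ) (C : Set (X × ℝ)) : ℝ≥0∞ :=
  ∑' B : C, hGauge μ q (B : X × ℝ).1 (B : X × ℝ).2

/-- `ξ` has codimension at least `Q` (with constant `K`). -/
def HasCodimAtLeast [MetricSpace X] [MeasurableSpace X] (ξ : X → ℝ → ℝ≥0∞)
    (μ : Measure X) (Q : ℝ) (K : ℝ≥0∞) : Prop :=
  ∀ (x : X) (r R : ℝ), 0 < r → r ≤ R →
    ξ x R / ξ x r ≤ K * (hGauge μ Q x R / hGauge μ Q x r)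

/-- `X` is a geodesic space: any two points are joined by a curve of length `dist x y`. -/
def GeodesicSpace (X : Type*) [MetricSpace X] : Prop :=
  ∀ x y : X, ∃ γ : ℝ → X, γ 0 = x ∧ γ 1 = y ∧ ContinuousOn γ (Set.Icc 0 1) ∧
    eVariationOn γ (Set.Icc 0 1) = ENNReal.ofReal (dist x y)

/-- A `c`-John curve on the parameter interval `[a, b]`: every tail subcurve from `γ t`
has length at most `c · d(γ t, ∂Ω)`. -/
def IsJohnCurve [MetricSpace X] (Ω : Set X) (c : ℝ) (γ : ℝ → X) (a b : ℝ) : Prop :=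
  ContinuousOn γ (Set.Icc a b) ∧ eVariationOn γ (Set.Icc a b) < ⊤ ∧
  ∀ t ∈ Set.Icc a b, eVariationOn γ (Set.Icc t b) ≤
    ENNReal.ofReal (c * Metric.infDist (γ t) (frontier Ω))

/-- The `c`-accessible boundary of `Ω` from `x₀`. -/
def accBoundary [MetricSpace X] (Ω : Set X) (x₀ : X) (c : ℝ) : Set X :=
  {w ∈ frontier Ω | ∃ γ : ℝ → X, γ 0 = x₀ ∧ γ 1 = w ∧ IsJohnCurve Ω c γ 0 1}

/-- `g = sup_{B ∈ ℬ} (1/rad B) · 1_{2B}`. -/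
def ballSup [MetricSpace X] (ℬ : Set (X × ℝ)) : X → ℝ≥0∞ :=
  fun w => ⨆ (B : ℬ) (_ : w ∈ Metric.ball (B : X × ℝ).1 (2 * (B : X × ℝ).2)),
    (ENNReal.ofReal (B : X × ℝ).2)⁻¹

/-- The restricted (uncentered) maximal function at scale `s`. -/
def restrMax [MetricSpace X] [MeasurableSpace X] (μ : Measure X) (g : X → ℝ≥0∞)
    (s : ℝ) (x : X) : ℝ≥0∞ :=
  ⨆ (z : X) (ρ : ℝ) (_ : 0 < ρ) (_ : ρ < s) (_ : x ∈ Metric.ball z ρ),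
    (∫⁻ w in Metric.ball z ρ, g w ∂μ) / μ (Metric.ball z ρ)

/-- `g` is an upper gradient of `f`: the upper gradient inequality holds along all
unit-speed (1-Lipschitz) curves. -/
def IsUpperGradient [MetricSpace X] (f : X → ℝ) (g : X → ℝ≥0∞) : Prop :=
  ∀ (L : ℝ) (γ : ℝ → X), 0 ≤ L → LipschitzOnWith 1 γ (Set.Icc 0 L) →
    ENNReal.ofReal |f (γ L) - f (γ 0)| ≤ ∫⁻ t in Set.Icc 0 L, g (γ t)

/-- The `p`-Poincaré inequality with constants `CP, lam`. -/
def PoincareIneq [MetricSpace X] [MeasurableSpace X] (μ : Measure X)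
    (p CP lam : ℝ) : Prop :=
  ∀ (f : X → ℝ) (g : X → ℝ≥0∞), MeasureTheory.LocallyIntegrable f μ → Measurable g →
    IsUpperGradient f g →
    ∀ (x : X) (r : ℝ), 0 < r →
      ⨍ y in Metric.ball x r, |f y - ⨍ w in Metric.ball x r, f w ∂μ| ∂μ ≤
        CP * r * (((∫⁻ w in Metric.ball x (lam * r), g w ^ p ∂μ) /
          μ (Metric.ball x (lam * r))).toReal) ^ (1 / p)

/-- The pointwise `p`-Poincaré inequality with constants `(CP, L, lam)`. -/
def PointwisePoincare [MetricSpace X] [MeasurableSpace X] (μ : Measure X)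
    (p CP L lam : ℝ) : Prop :=
  ∀ (x y : X) (g : X → ℝ≥0∞), Measurable g →
    (⨅ (ℓ : ℝ) (γ : ℝ → X) (_ : 0 ≤ ℓ) (_ : ℓ ≤ L * dist x y)
        (_ : LipschitzOnWith 1 γ (Set.Icc 0 ℓ)) (_ : γ 0 = x) (_ : γ ℓ = y)
        (_ : ∀ t ∈ Set.Icc 0 ℓ, γ t ∈ Metric.ball x (2 * lam * dist x y)),
        ∫⁻ t in Set.Icc 0 ℓ, g (γ t)) ≤
      ENNReal.ofReal (CP * dist x y) *
        (restrMax μ (fun w => g w ^ p) (lam * dist x y) x +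
         restrMax μ (fun w => g w ^ p) (lam * dist x y) y) ^ (1 / p)

/-- The `s`-dimensional Hausdorff content (at scale `∞`). -/
def sContent {Y : Type*} [MetricSpace Y] (s : ℝ) (A : Set Y) : ℝ≥0∞ :=
  ⨅ (t : ℕ → Set Y) (_ : A ⊆ ⋃ n, t n), ∑' n, EMetric.diam (t n) ^ s

end Paper

/-!
Fix `k` with `τ < 2 ^ k`. Halving `k` times, every ball `B(x, s)` with `s ≤ τ r` is covered by at
most `N ^ k` balls of radius `s / 2 ^ k ≤ r`. Each intermediate ball is centered in its parent,
which has twice its radius, so the doubling gauge bounds the gauge of each final ball by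
`D ^ k ξ(x, s)`. Refining every ball of an admissible cover at scale `τ r` in this way gives one
at scale `r` whose gauge sum is at most `(N D) ^ k` times larger.
-/

namespace Paper

variable {X : Type*} [MetricSpace X]

theorem gaugeContent_le_gaugeSum {ξ : X → ℝ → ℝ≥0∞} {r : ℝ} {A : Set X} {C : Set (X × ℝ)}
    (hC : C.Countable) (hrad : ∀ B ∈ C, 0 < B.2 ∧ B.2 ≤ r)
    (hcov : A ⊆ ⋃ B ∈ C, ball B.1 B.2) :
    gaugeContent ξ r A ≤ gaugeSum ξ C :=
  iInf_le_of_le C <| iInf_le_of_le hC <| iInf_le_of_le hrad <| iInf_le_of_le hcov le_rfl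

theorem le_gaugeContent {ξ : X → ℝ → ℝ≥0∞} {r : ℝ} {A : Set X} {a : ℝ≥0∞}
    (h : ∀ C : Set (X × ℝ), C.Countable → (∀ B ∈ C, 0 < B.2 ∧ B.2 ≤ r) →
      A ⊆ ⋃ B ∈ C, ball B.1 B.2 → a ≤ gaugeSum ξ C) :
    a ≤ gaugeContent ξ r A :=
  le_iInf fun C => le_iInf₂ fun hC hrad => le_iInf fun hcov => h C hC hrad hcov

theorem gaugeContent_le_mul_of_forall_ball_cover {ξ : X → ℝ → ℝ≥0∞} {r R : ℝ} {c : ℝ≥0∞}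
    (hc0 : c ≠ 0) (hc : c ≠ ∞)
    (hcover : ∀ (x : X) (s : ℝ), 0 < s → s ≤ R → ∃ F : Finset (X × ℝ),
      (∀ B ∈ F, 0 < B.2 ∧ B.2 ≤ r) ∧ ball x s ⊆ ⋃ B ∈ F, ball B.1 B.2 ∧
      ∑ B ∈ F, ξ B.1 B.2 ≤ c * ξ x s)
    (A : Set X) :
    gaugeContent ξ r A ≤ c * gaugeContent ξ R A := by
  rw [mul_comm, ← ENNReal.div_le_iff hc0 hc]
  refine le_gaugeContent fun C hC hrad hcov => ?_
  rw [ENNReal.div_le_iff hc0 hc, mul_comm]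
  choose F hFrad hFcov hFsum using fun B : C => hcover B.1.1 B.1.2 (hrad B B.2).1 (hrad B B.2).2
  have : Countable C := hC.to_subtype
  calc gaugeContent ξ r A
      ≤ gaugeSum ξ (⋃ B : C, (F B : Set (X × ℝ))) := by
        refine gaugeContent_le_gaugeSum (countable_iUnion fun B => (F B).countable_toSet)
          (fun B' hB' => ?_) fun z hz => ?_
        · obtain ⟨B, hB⟩ := mem_iUnion.1 hB'
          exact hFrad B B' hB
        · obtain ⟨B, hB, hzB⟩ := mem_iUnion₂.1 (hcov hz)
          obtain ⟨B', hB', hzB'⟩ := mem_iUnion₂.1 (hFcov ⟨B, hB⟩ hzB)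
          exact mem_iUnion₂.2 ⟨B', mem_iUnion.2 ⟨⟨B, hB⟩, hB'⟩, hzB'⟩
    _ ≤ ∑' B : C, ∑' B' : (F B : Set (X × ℝ)), ξ B'.1.1 B'.1.2 :=
        ENNReal.tsum_iUnion_le_tsum (fun B' : X × ℝ => ξ B'.1 B'.2) _
    _ = ∑' B : C, ∑ B' ∈ F B, ξ B'.1 B'.2 :=
        tsum_congr fun B => Finset.tsum_subtype' (F B) fun B' => ξ B'.1 B'.2
    _ ≤ ∑' B : C, c * ξ B.1.1 B.1.2 := ENNReal.tsum_le_tsum hFsum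
    _ = c * gaugeSum ξ C := ENNReal.tsum_mul_left

theorem DoublingGauge.le_mul_of_mem_ball {ξ : X → ℝ → ℝ≥0∞} {D : ℝ≥0∞}
    (hξ : DoublingGauge ξ D) {x y : X} {s : ℝ} (hy : y ∈ ball x s) :
    ξ y (s / 2) ≤ D * ξ x s := by
  have hs := pos_of_mem_ball hy
  exact (hξ.2 x y s (s / 2) (by positivity) (by linarith) (by linarith)
    ⟨y, mem_ball_self (by positivity), hy⟩).1

/-- A maximal `s/2`-separated subset of `ball x s` is an `s/2`-net of it. -/
theorem MetricDoubling.exists_finset_cover_ball_half {N : ℕ} (hX : MetricDoubling X N)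
    (x : X) (s : ℝ) :
    ∃ F : Finset X, F.card ≤ N ∧ ↑F ⊆ ball x s ∧ ball x s ⊆ ⋃ y ∈ F, ball y (s / 2) := by
  classical
  let P : Finset X → Prop := fun F =>
    ↑F ⊆ ball x s ∧ (F : Set X).Pairwise fun y z => s / 2 ≤ dist y z
  have hbound : ∀ F, P F → F.card ≤ N := fun F hF => hX x s F hF.1 fun y hy z hz => hF.2 hy hz
  let m := Nat.findGreatest (fun m => ∃ F, P F ∧ F.card = m) N
  obtain ⟨F, hF, hFm⟩ : ∃ F, P F ∧ F.card = m :=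
    Nat.findGreatest_spec (P := fun m => ∃ F, P F ∧ F.card = m) (Nat.zero_le N)
      ⟨∅, by simp [P]⟩
  have hmax : ∀ G, P G → G.card ≤ F.card := fun G hG =>
    hFm ▸ Nat.le_findGreatest (hbound G hG) ⟨G, hG, rfl⟩
  refine ⟨F, hbound F hF, hF.1, fun z hz => ?_⟩
  by_contra hzF
  have hsep : ∀ y ∈ F, s / 2 ≤ dist z y := fun y hy =>
    not_lt.1 fun h => hzF (mem_biUnion hy h)
  have hzF' : z ∉ F := fun h => by
    have := hsep z h
    linarith [pos_of_mem_ball hz, dist_self z]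
  have hP : P (insert z F) := by
    refine ⟨by simpa using insert_subset hz hF.1, ?_⟩
    rw [Finset.coe_insert]
    exact hF.2.insert_of_notMem (by simpa using hzF') fun y hy =>
      ⟨hsep y hy, dist_comm z y ▸ hsep y hy⟩
  have := hmax _ hP
  rw [Finset.card_insert_of_notMem hzF'] at this
  omega

theorem MetricDoubling.exists_finset_cover_ball_pow {N : ℕ} (hX : MetricDoubling X N)
    {ξ : X → ℝ → ℝ≥0∞} {D : ℝ≥0∞} (hξ : DoublingGauge ξ D) (x : X) (s : ℝ) (k : ℕ) :
    ∃ F : Finset X, F.card ≤ N ^ k ∧ ball x s ⊆ ⋃ y ∈ F, ball y (s / 2 ^ k) ∧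
      ∀ y ∈ F, ξ y (s / 2 ^ k) ≤ D ^ k * ξ x s := by
  induction k with
  | zero => exact ⟨{x}, by simp, by simp, by simp⟩
  | succ k ih =>
    classical
    obtain ⟨F, hFcard, hFcov, hFξ⟩ := ih
    choose G hGcard hGsub hGcov using fun y => hX.exists_finset_cover_ball_half y (s / 2 ^ k)
    simp only [pow_succ, ← div_div]
    refine ⟨F.biUnion G, ?_, fun z hz => ?_, fun w hw => ?_⟩
    · exact (Finset.card_biUnion_le_card_mul F G N fun y _ => hGcard y).trans
        (Nat.mul_le_mul_right N hFcard)
    · obtain ⟨y, hy, hzy⟩ := mem_iUnion₂.1 (hFcov hz)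
      obtain ⟨w, hw, hzw⟩ := mem_iUnion₂.1 (hGcov y hzy)
      exact mem_iUnion₂.2 ⟨w, Finset.mem_biUnion.2 ⟨y, hy, hw⟩, hzw⟩
    · obtain ⟨y, hy, hwy⟩ := Finset.mem_biUnion.1 hw
      calc ξ w (s / 2 ^ k / 2) ≤ D * ξ y (s / 2 ^ k) := hξ.le_mul_of_mem_ball (hGsub y hwy)
        _ ≤ D * (D ^ k * ξ x s) := by gcongr; exact hFξ y hy
        _ = D ^ k * D * ξ x s := by ring

theorem MetricDoubling.exists_ball_cover_gaugeSum_le {N : ℕ} (hX : MetricDoubling X N)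
    {ξ : X → ℝ → ℝ≥0∞} {D : ℝ≥0∞} (hξ : DoublingGauge ξ D) (x : X) (s : ℝ) (k : ℕ) :
    ∃ F : Finset (X × ℝ), (∀ B ∈ F, B.2 = s / 2 ^ k) ∧ ball x s ⊆ ⋃ B ∈ F, ball B.1 B.2 ∧
      ∑ B ∈ F, ξ B.1 B.2 ≤ (N * D) ^ k * ξ x s := by
  classical
  obtain ⟨F, hFcard, hFcov, hFξ⟩ := hX.exists_finset_cover_ball_pow hξ x s k
  refine ⟨F.image (·, s / 2 ^ k), by simp, fun z hz => ?_, ?_⟩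
  · obtain ⟨y, hy, hzy⟩ := mem_iUnion₂.1 (hFcov hz)
    exact mem_iUnion₂.2 ⟨(y, s / 2 ^ k), Finset.mem_image_of_mem _ hy, hzy⟩
  · rw [Finset.sum_image fun _ _ _ _ h => (Prod.ext_iff.1 h).1]
    calc ∑ y ∈ F, ξ y (s / 2 ^ k) ≤ F.card * (D ^ k * ξ x s) := by
          simpa using Finset.sum_le_card_nsmul F _ _ hFξ
      _ ≤ N ^ k * (D ^ k * ξ x s) := by gcongr; exact_mod_cast hFcard
      _ = (N * D) ^ k * ξ x s := by ring

end Paper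

theorem sharp_content_scale_change_general {X : Type*} [MetricSpace X]
    (N : ℕ) (hX : Paper.MetricDoubling X N)
    (D : ℝ≥0∞) (hD : 1 ≤ D) (hDt : D < ⊤) (τ : ℝ) :
    ∃ C : ℝ≥0∞, 0 < C ∧ C < ⊤ ∧
      ∀ ξ : X → ℝ → ℝ≥0∞, Paper.DoublingGauge ξ D →
        ∀ (K : Set X) (r : ℝ), 0 < r →
          Paper.gaugeContent ξ r K ≤ C * Paper.gaugeContent ξ (τ * r) K := by
  obtain ⟨k, hk⟩ := pow_unbounded_of_one_lt τ (one_lt_two : (1 : ℝ) < 2)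
  have hC0 : ((N + 1) * D) ^ k ≠ 0 :=
    pow_ne_zero _ (mul_ne_zero (by simp) (zero_lt_one.trans_le hD).ne')
  have hC : ((N + 1) * D) ^ k ≠ ∞ := by finiteness
  refine ⟨_, pos_iff_ne_zero.2 hC0, hC.lt_top, fun ξ hξ K r hr => ?_⟩
  refine Paper.gaugeContent_le_mul_of_forall_ball_cover hC0 hC (fun x s hs hsr => ?_) K
  obtain ⟨F, hFrad, hFcov, hFsum⟩ := hX.exists_ball_cover_gaugeSum_le hξ x s k
  refine ⟨F, fun B hB => ?_, hFcov, hFsum.trans (by gcongr; exact le_self_add)⟩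
  rw [hFrad B hB, div_le_iff₀ (by positivity)]
  exact ⟨by positivity, by nlinarith⟩

theorem sharp_content_scale_change {X : Type*} [MetricSpace X]
    (N : ℕ) (hX : Paper.MetricDoubling X N)
    (D : ℝ≥0∞) (hD : 1 ≤ D) (hDt : D < ⊤) (τ : ℝ) (hτ : 1 ≤ τ) :
    ∃ C : ℝ≥0∞, 0 < C ∧ C < ⊤ ∧
      ∀ ξ : X → ℝ → ℝ≥0∞, Paper.DoublingGauge ξ D →
        ∀ (K : Set X) (r : ℝ), 0 < r →
          Paper.gaugeContent ξ r K ≤ C * Paper.gaugeContent ξ (τ * r) K :=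
  sharp_content_scale_change_general N hX D hD hDt τ
end
end

section
/- Let (X,d,μ) be a metric measure space with μ a doubling measure and ξ a doubling gauge function of codimension at least Q > p > 0. Then there exists a constant K₁ ≥ 1 (depending only on the doubling constants of ξ and μ and the codimension constant K) such that the following holds: for any ball B₀ = B(x₀, r₀) and any countable collection ℬ of balls with rad(ℬ) ≤ r₀ and B' ∩ B₀ ≠ ∅ for every B' ∈ ℬ, one has K₁ · ξ(ℬ)/ξ(B₀) ≥ h_Q(ℬ)/h_Q(B₀) ≥ (h_p(ℬ)/h_p(B₀)) · (rad(B₀)/rad(ℬ))^{Q−p}, where h_q(B) = μ(B)/rad(B)^q and for a collection 𝒜, h_q(𝒜) = Σ_{B∈𝒜} h_q(B). -/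
open Metric Set MeasureTheory ENNReal

noncomputable section

/-!
Both inequalities are proved ball by ball and then summed. For a ball `B = B(x, r)` of `ℬ`,
the codimension bound compares `h_Q(B) / h_Q(B(x, r₀))` with `ξ(B) / ξ(B(x, r₀))`; the balls
`B(x, r₀)` and `B₀` have equal radii and meet, so doubling of `μ` (twice) and of `ξ` (once)
replaces `B(x, r₀)` by `B₀`, which gives `K₁ = D³ K`. The second inequality is the identity
`h_p(B) = h_Q(B) rad(B)^(Q-p)` combined with `rad(B) ≤ rad(ℬ)`.
-/

namespace ENNReal

theorem div_le_div_iff_mul_le_mul {a b c d : ℝ≥0∞} (hb0 : b ≠ 0) (hbt : b ≠ ⊤)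
    (hd0 : d ≠ 0) (hdt : d ≠ ⊤) : a / b ≤ c / d ↔ a * d ≤ c * b := by
  rw [ENNReal.div_le_iff hb0 hbt, div_eq_mul_inv, mul_right_comm, ← div_eq_mul_inv,
    ENNReal.le_div_iff_mul_le (.inl hd0) (.inl hdt)]

theorem div_le_mul_div_swap {a b c d K : ℝ≥0∞} (ha0 : a ≠ 0) (hat : a ≠ ⊤)
    (hb0 : b ≠ 0) (hbt : b ≠ ⊤) (hc0 : c ≠ 0) (hct : c ≠ ⊤) (hd0 : d ≠ 0) (hdt : d ≠ ⊤)
    (h : a / b ≤ K * (c / d)) : d / c ≤ K * (b / a) := by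
  rw [← mul_div_assoc, div_le_div_iff_mul_le_mul hb0 hbt hd0 hdt] at h
  rw [← mul_div_assoc, div_le_div_iff_mul_le_mul hc0 hct ha0 hat]
  calc d * a = a * d := mul_comm d a
    _ ≤ K * c * b := h
    _ = K * b * c := by ring

theorem div_le_mul_div_of_le_mul {a b c D : ℝ≥0∞} (hc0 : c ≠ 0) (hct : c ≠ ⊤)
    (h : c ≤ D * b) : a / b ≤ D * (a / c) := by
  have hinv : b⁻¹ ≤ D * c⁻¹ := by
    rw [← div_eq_mul_inv, ENNReal.le_div_iff_mul_le (.inl hc0) (.inl hct)]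
    calc b⁻¹ * c ≤ b⁻¹ * (D * b) := by gcongr
      _ = D * (b * b⁻¹) := by ring
      _ ≤ D := mul_le_of_le_one_right' (ENNReal.mul_inv_le_one b)
  calc a / b = a * b⁻¹ := div_eq_mul_inv a b
    _ ≤ a * (D * c⁻¹) := by gcongr
    _ = D * (a / c) := by rw [div_eq_mul_inv]; ring

protected theorem tsum_div_const {ι : Type*} (f : ι → ℝ≥0∞) (a : ℝ≥0∞) :
    ∑' i, f i / a = (∑' i, f i) / a := by
  simp only [div_eq_mul_inv, ENNReal.tsum_mul_right]

end ENNReal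

namespace Paper

variable {X : Type*} [MetricSpace X] [MeasurableSpace X] {μ : Measure X}

theorem DoublingMeasure.measure_ball_le {D : ℝ≥0∞} (hμ : DoublingMeasure μ D) {x x₀ : X}
    {r : ℝ} (hr : 0 < r) (hx : dist x x₀ < 3 * r) :
    μ (ball x r) ≤ D ^ 2 * μ (ball x₀ r) :=
  calc μ (ball x r) ≤ μ (ball x₀ (2 * (2 * r))) :=
        measure_mono (ball_subset_ball' (by linarith))
    _ ≤ D * μ (ball x₀ (2 * r)) := (hμ x₀ (2 * r) (by linarith)).2.2
    _ ≤ D * (D * μ (ball x₀ r)) := by gcongr; exact (hμ x₀ r hr).2.2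
    _ = D ^ 2 * μ (ball x₀ r) := by ring

theorem hGauge_ne_zero {D : ℝ≥0∞} (hμ : DoublingMeasure μ D) (q : ℝ) (x : X) {r : ℝ}
    (hr : 0 < r) : hGauge μ q x r ≠ 0 :=
  (ENNReal.div_pos (hμ x r hr).1.ne' ENNReal.ofReal_ne_top).ne'

theorem hGauge_ne_top {D : ℝ≥0∞} (hμ : DoublingMeasure μ D) (q : ℝ) (x : X) {r : ℝ}
    (hr : 0 < r) : hGauge μ q x r ≠ ⊤ :=
  ENNReal.div_ne_top (hμ x r hr).2.1.ne (ENNReal.ofReal_pos.2 (by positivity)).ne'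

theorem hGauge_eq_hGauge_mul_rpow (μ : Measure X) (p Q : ℝ) (x : X) {r : ℝ} (hr : 0 < r) :
    hGauge μ p x r = hGauge μ Q x r * ENNReal.ofReal (r ^ (Q - p)) := by
  have hsplit :
      ENNReal.ofReal (r ^ Q) = ENNReal.ofReal (r ^ p) * ENNReal.ofReal (r ^ (Q - p)) := by
    rw [← ENNReal.ofReal_mul (by positivity), ← Real.rpow_add hr, add_sub_cancel]
  rw [hGauge, hGauge, hsplit, ← ENNReal.mul_div_right_comm,
    ENNReal.mul_div_mul_right _ _ (ENNReal.ofReal_pos.2 (by positivity)).ne' ENNReal.ofReal_ne_top]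

theorem HasCodimAtLeast.hGauge_div_le {ξ : X → ℝ → ℝ≥0∞} {Q : ℝ} {K D D' : ℝ≥0∞}
    (hcodim : HasCodimAtLeast ξ μ Q K) (hμ : DoublingMeasure μ D) (hξ : DoublingGauge ξ D')
    (x : X) {r R : ℝ} (hr : 0 < r) (hrR : r ≤ R) :
    hGauge μ Q x r / hGauge μ Q x R ≤ K * (ξ x r / ξ x R) := by
  have hR : 0 < R := hr.trans_le hrR
  exact ENNReal.div_le_mul_div_swap (hξ.1 x R hR).1.ne' (hξ.1 x R hR).2.ne
    (hξ.1 x r hr).1.ne' (hξ.1 x r hr).2.ne (hGauge_ne_zero hμ Q x hR) (hGauge_ne_top hμ Q x hR)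
    (hGauge_ne_zero hμ Q x hr) (hGauge_ne_top hμ Q x hr) (hcodim x r R hr hrR)

theorem hGauge_div_le_mul_gauge_div {ξ : X → ℝ → ℝ≥0∞} {Q : ℝ} {K D : ℝ≥0∞}
    (hμ : DoublingMeasure μ D) (hξ : DoublingGauge ξ D) (hcodim : HasCodimAtLeast ξ μ Q K)
    {x x₀ : X} {r r₀ : ℝ} (hr : 0 < r) (hrr₀ : r ≤ r₀)
    (hmeet : (ball x r ∩ ball x₀ r₀).Nonempty) :
    hGauge μ Q x r / hGauge μ Q x₀ r₀ ≤ D ^ 3 * K * (ξ x r / ξ x₀ r₀) := by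
  have hr₀ : 0 < r₀ := hr.trans_le hrr₀
  obtain ⟨z, hzx, hzx₀⟩ := hmeet
  have hdist : dist x x₀ < 3 * r₀ := by
    have := dist_triangle x z x₀
    rw [mem_ball'] at hzx
    rw [mem_ball] at hzx₀
    linarith
  have hmeas : hGauge μ Q x r₀ ≤ D ^ 2 * hGauge μ Q x₀ r₀ := by
    rw [hGauge, hGauge, ← mul_div_assoc]
    gcongr
    exact hμ.measure_ball_le hr₀ hdist
  have hgauge : ξ x₀ r₀ ≤ D * ξ x r₀ :=
    (hξ.2 x₀ x r₀ r₀ hr₀ le_rfl (by linarith) ⟨z, ball_subset_ball hrr₀ hzx, hzx₀⟩).2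
  calc hGauge μ Q x r / hGauge μ Q x₀ r₀
      ≤ D ^ 2 * (hGauge μ Q x r / hGauge μ Q x r₀) :=
        ENNReal.div_le_mul_div_of_le_mul (hGauge_ne_zero hμ Q x hr₀)
          (hGauge_ne_top hμ Q x hr₀) hmeas
    _ ≤ D ^ 2 * (K * (ξ x r / ξ x r₀)) := by gcongr; exact hcodim.hGauge_div_le hμ hξ x hr hrr₀
    _ ≤ D ^ 2 * (K * (D * (ξ x r / ξ x₀ r₀))) := by
        gcongr
        exact ENNReal.div_le_mul_div_of_le_mul (hξ.1 x₀ r₀ hr₀).1.ne' (hξ.1 x₀ r₀ hr₀).2.ne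
          hgauge
    _ = D ^ 3 * K * (ξ x r / ξ x₀ r₀) := by ring

theorem hGauge_div_mul_le_hGauge_div (μ : Measure X) {p Q : ℝ} (hpQ : p ≤ Q) {x x₀ : X}
    {r r₀ s : ℝ} (hr : 0 < r) (hrs : r ≤ s) (hr₀ : 0 < r₀) :
    hGauge μ p x r / hGauge μ p x₀ r₀ * ENNReal.ofReal ((r₀ / s) ^ (Q - p)) ≤
      hGauge μ Q x r / hGauge μ Q x₀ r₀ := by
  set c := ENNReal.ofReal (r₀ ^ (Q - p))
  have hc0 : c ≠ 0 := (ENNReal.ofReal_pos.2 (by positivity)).ne'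
  have hs : 0 < s := hr.trans_le hrs
  have hscale : r ^ (Q - p) * (r₀ / s) ^ (Q - p) ≤ r₀ ^ (Q - p) := by
    rw [← Real.mul_rpow hr.le (by positivity), mul_div_left_comm]
    exact Real.rpow_le_rpow (by positivity)
      (mul_le_of_le_one_right hr₀.le ((div_le_one hs).2 hrs)) (sub_nonneg.2 hpQ)
  calc hGauge μ p x r / hGauge μ p x₀ r₀ * ENNReal.ofReal ((r₀ / s) ^ (Q - p))
      = hGauge μ p x r * ENNReal.ofReal ((r₀ / s) ^ (Q - p)) / hGauge μ p x₀ r₀ :=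
        ENNReal.mul_div_right_comm.symm
    _ ≤ hGauge μ Q x r * c / hGauge μ p x₀ r₀ := by
        rw [hGauge_eq_hGauge_mul_rpow μ p Q x hr, mul_assoc, ← ENNReal.ofReal_mul (by positivity)]
        gcongr
        exact ENNReal.ofReal_le_ofReal hscale
    _ = hGauge μ Q x r / hGauge μ Q x₀ r₀ := by
        rw [hGauge_eq_hGauge_mul_rpow μ p Q x₀ hr₀,
          ENNReal.mul_div_mul_right _ _ hc0 ENNReal.ofReal_ne_top]

end Paper

theorem content_comparison_general {X : Type*} [MetricSpace X] [MeasurableSpace X] (μ : Measure X)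
    (D : ℝ≥0∞) (hD : 1 ≤ D) (hDt : D < ⊤) (hμ : Paper.DoublingMeasure μ D)
    (ξ : X → ℝ → ℝ≥0∞) (hξ : Paper.DoublingGauge ξ D)
    (p Q : ℝ) (hpQ : p < Q)
    (K : ℝ≥0∞) (hK : 1 ≤ K) (hKt : K < ⊤) (hcodim : Paper.HasCodimAtLeast ξ μ Q K) :
    ∃ K₁ : ℝ≥0∞, 1 ≤ K₁ ∧ K₁ < ⊤ ∧
      ∀ (x₀ : X) (r₀ : ℝ), 0 < r₀ →
        ∀ ℬ : Set (X × ℝ), ℬ.Countable →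
          (∀ B ∈ ℬ, 0 < B.2 ∧ B.2 ≤ r₀ ∧
            (Metric.ball B.1 B.2 ∩ Metric.ball x₀ r₀).Nonempty) →
          Paper.hSum μ Q ℬ / Paper.hGauge μ Q x₀ r₀ ≤
              K₁ * (Paper.gaugeSum ξ ℬ / ξ x₀ r₀) ∧
            (Paper.hSum μ p ℬ / Paper.hGauge μ p x₀ r₀) *
                ENNReal.ofReal ((r₀ / (⨆ B : ℬ, (B : X × ℝ).2)) ^ (Q - p)) ≤
              Paper.hSum μ Q ℬ / Paper.hGauge μ Q x₀ r₀ := by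
  refine ⟨D ^ 3 * K, one_le_mul_of_one_le_of_one_le (one_le_pow₀ hD) hK,
    ENNReal.mul_lt_top (ENNReal.pow_lt_top hDt) hKt, ?_⟩
  intro x₀ r₀ hr₀ ℬ _ hℬ
  have hle_sup : ∀ B : ℬ, (B : X × ℝ).2 ≤ ⨆ B : ℬ, (B : X × ℝ).2 :=
    le_ciSup ⟨r₀, by rintro _ ⟨B, rfl⟩; exact (hℬ B B.2).2.1⟩
  simp only [Paper.hSum, Paper.gaugeSum, ← ENNReal.tsum_div_const, ← ENNReal.tsum_mul_left,
    ← ENNReal.tsum_mul_right]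
  refine ⟨ENNReal.tsum_le_tsum fun B => ?_, ENNReal.tsum_le_tsum fun B => ?_⟩
  · obtain ⟨hr, hrr₀, hmeet⟩ := hℬ B B.2
    exact Paper.hGauge_div_le_mul_gauge_div hμ hξ hcodim hr hrr₀ hmeet
  · exact Paper.hGauge_div_mul_le_hGauge_div μ hpQ.le (hℬ B B.2).1 (hle_sup B) hr₀

theorem content_comparison {X : Type*} [MetricSpace X] [MeasurableSpace X] (μ : Measure X)
    (D : ℝ≥0∞) (hD : 1 ≤ D) (hDt : D < ⊤) (hμ : Paper.DoublingMeasure μ D)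
    (ξ : X → ℝ → ℝ≥0∞) (hξ : Paper.DoublingGauge ξ D)
    (p Q : ℝ) (hp : 0 < p) (hpQ : p < Q)
    (K : ℝ≥0∞) (hK : 1 ≤ K) (hKt : K < ⊤) (hcodim : Paper.HasCodimAtLeast ξ μ Q K) :
    ∃ K₁ : ℝ≥0∞, 1 ≤ K₁ ∧ K₁ < ⊤ ∧
      ∀ (x₀ : X) (r₀ : ℝ), 0 < r₀ →
        ∀ ℬ : Set (X × ℝ), ℬ.Countable →
          (∀ B ∈ ℬ, 0 < B.2 ∧ B.2 ≤ r₀ ∧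
            (Metric.ball B.1 B.2 ∩ Metric.ball x₀ r₀).Nonempty) →
          Paper.hSum μ Q ℬ / Paper.hGauge μ Q x₀ r₀ ≤
              K₁ * (Paper.gaugeSum ξ ℬ / ξ x₀ r₀) ∧
            (Paper.hSum μ p ℬ / Paper.hGauge μ p x₀ r₀) *
                ENNReal.ofReal ((r₀ / (⨆ B : ℬ, (B : X × ℝ).2)) ^ (Q - p)) ≤
              Paper.hSum μ Q ℬ / Paper.hGauge μ Q x₀ r₀ :=
  content_comparison_general μ D hD hDt hμ ξ hξ p Q hpQ K hK hKt hcodim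
end
end

section
/- Let Ω ⊂ X be an open set in a metric space, let b ∈ (0,1) and c₁ ≥ 1. Then there exists c₂ = 2c₁²/(1−b) + c₁ such that the following holds. Let N ∈ ℕ and let x₀, x₁, …, x_{N−1} ∈ Ω and x_N ∈ closure(Ω) satisfy d(x_{k+1}, ∂Ω) ≤ b · d(x_k, ∂Ω) for every k = 0, …, N−1. If for every k = 0, …, N−1 there exists a c₁-John curve γ_k starting at x_k and ending at x_{k+1}, then the concatenation of the curves γ₀, …, γ_{N−1} is a c₂-John curve starting at x₀ and ending at x_N. -/
open Metric Set MeasureTheory ENNReal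

noncomputable section

/-! Write `d(y)` for the distance from `y` to `∂Ω`. From a point `y` on `γ_k`, the rest of `γ_k` has
length at most `c₁ d(y)`, and the later curves have lengths at most `c₁ d(x_j)` for `j > k`, which
decay geometrically and sum to at most `c₁ d(x_{k+1}) / (1 - b)`. Since `x_{k+1}` lies within
`c₁ d(y)` of `y`, `d(x_{k+1}) ≤ (1 + c₁) d(y) ≤ 2 c₁ d(y)`. -/

section Concatenation

variable {X : Type*}

def concatCurves (γ : ℕ → ℝ → X) (N : ℕ) (p : X) (t : ℝ) : X :=
  if t < N then γ ⌊t⌋₊ (t - ⌊t⌋₊) else p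

variable {γ : ℕ → ℝ → X} {N : ℕ} {x : ℕ → X}

theorem concatCurves_eq_of_mem_Icc (h₀ : ∀ k < N, γ k 0 = x k)
    (h₁ : ∀ k < N, γ k 1 = x (k + 1)) {k : ℕ} (hk : k < N) {t : ℝ}
    (ht : t ∈ Icc (k : ℝ) (k + 1)) :
    concatCurves γ N (x N) t = γ k (t - k) := by
  obtain ht' | rfl := ht.2.lt_or_eq
  · have hfloor : ⌊t⌋₊ = k := (Nat.floor_eq_iff (k.cast_nonneg.trans ht.1)).2 ⟨ht.1, ht'⟩
    have htN : t < N := ht'.trans_le (by exact_mod_cast hk)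
    simp [concatCurves, htN, hfloor]
  · rw [add_sub_cancel_left, h₁ k hk]
    obtain hk' | rfl := (Nat.succ_le_of_lt hk).lt_or_eq
    · have hkN : (k : ℝ) + 1 < N := by exact_mod_cast hk'
      have hfloor : ⌊(k : ℝ) + 1⌋₊ = k + 1 := by exact_mod_cast Nat.floor_natCast (k + 1)
      simp [concatCurves, hkN, hfloor, h₀ (k + 1) hk']
    · simp [concatCurves]

theorem concatCurves_natCast (h₀ : ∀ k < N, γ k 0 = x k) (h₁ : ∀ k < N, γ k 1 = x (k + 1))
    {k : ℕ} (hk : k ≤ N) : concatCurves γ N (x N) k = x k := by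
  obtain hk | rfl := hk.lt_or_eq
  · rw [concatCurves_eq_of_mem_Icc h₀ h₁ hk ⟨le_rfl, by linarith⟩, sub_self, h₀ k hk]
  · simp [concatCurves]

theorem eVariationOn_concatCurves [PseudoEMetricSpace X] (h₀ : ∀ k < N, γ k 0 = x k)
    (h₁ : ∀ k < N, γ k 1 = x (k + 1)) {k : ℕ} (hk : k < N) {t : ℝ}
    (ht : t ∈ Icc (k : ℝ) (k + 1)) :
    eVariationOn (concatCurves γ N (x N)) (Icc t (k + 1)) =
      eVariationOn (γ k) (Icc (t - k) 1) := by
  have hEq : EqOn (concatCurves γ N (x N)) (γ k ∘ (· - (k : ℝ))) (Icc t (k + 1)) :=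
    fun u hu ↦ concatCurves_eq_of_mem_Icc h₀ h₁ hk ⟨ht.1.trans hu.1, hu.2⟩
  rw [eVariationOn.eq_of_eqOn hEq, eVariationOn.comp_eq_of_monotoneOn _ _
    (fun _ _ _ _ h ↦ sub_le_sub_right h _), image_sub_const_Icc, add_sub_cancel_left]

theorem continuousOn_concatCurves [TopologicalSpace X]
    (hγ : ∀ k < N, ContinuousOn (γ k) (Icc 0 1)) (h₀ : ∀ k < N, γ k 0 = x k) (h₁ : ∀ k < N, γ k 1 = x (k + 1)) :
    ContinuousOn (concatCurves γ N (x N)) (Icc 0 N) := by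
  rcases N.eq_zero_or_pos with rfl | hN
  · simp
  have hpiece (k : Fin N) : ContinuousOn (concatCurves γ N (x N)) (Icc (k : ℝ) (k + 1)) := by
    refine ContinuousOn.congr ?_ fun t ht ↦ concatCurves_eq_of_mem_Icc h₀ h₁ k.2 ht
    refine (hγ k k.2).comp (continuous_id.sub continuous_const).continuousOn fun t ht ↦ ?_
    exact ⟨sub_nonneg.2 ht.1, by linarith [ht.2]⟩
  refine ((locallyFinite_of_finite _).continuousOn_iUnion (fun _ ↦ isClosed_Icc) hpiece).mono ?_
  intro t ht
  rw [mem_iUnion]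
  obtain htN | rfl := ht.2.lt_or_eq
  · exact ⟨⟨⌊t⌋₊, (Nat.floor_lt ht.1).2 htN⟩, Nat.floor_le ht.1, (Nat.lt_floor_add_one t).le⟩
  · refine ⟨⟨N - 1, by omega⟩, by simp, ?_⟩
    simp [Nat.cast_sub (Nat.one_le_iff_ne_zero.2 hN.ne')]

end Concatenation

section John

variable {X : Type*} [MetricSpace X]

theorem Paper.IsJohnCurve.mono {Ω : Set X} {c c' : ℝ} {γ : ℝ → X} {a b : ℝ}
    (hγ : Paper.IsJohnCurve Ω c γ a b) (hcc' : c ≤ c') : Paper.IsJohnCurve Ω c' γ a b :=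
  ⟨hγ.1, hγ.2.1, fun t ht ↦ (hγ.2.2 t ht).trans <|
    ENNReal.ofReal_le_ofReal <| mul_le_mul_of_nonneg_right hcc' infDist_nonneg⟩

theorem eVariationOn_Icc_le_infDist_of_split {f : ℝ → X} {S : Set X} {t u v c C : ℝ}
    (htu : t ≤ u) (huv : u ≤ v) (hc : 0 ≤ c) (hC : 0 ≤ C)
    (h₁ : eVariationOn f (Icc t u) ≤ ENNReal.ofReal (c * infDist (f t) S))
    (h₂ : eVariationOn f (Icc u v) ≤ ENNReal.ofReal (C * infDist (f u) S)) :
    eVariationOn f (Icc t v) ≤ ENNReal.ofReal ((c + C * (1 + c)) * infDist (f t) S) := by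
  have hd : 0 ≤ infDist (f t) S := infDist_nonneg
  have hdist : dist (f t) (f u) ≤ c * infDist (f t) S := by
    rw [← edist_le_ofReal (by positivity)]
    exact (eVariationOn.edist_le f (left_mem_Icc.2 htu) (right_mem_Icc.2 htu)).trans h₁
  have hu : infDist (f u) S ≤ (1 + c) * infDist (f t) S := by
    linarith [infDist_le_infDist_add_dist (x := f u) (y := f t) (s := S), dist_comm (f t) (f u)]
  calc eVariationOn f (Icc t v) = eVariationOn f (Icc t u) + eVariationOn f (Icc u v) := by
        simpa using (eVariationOn.Icc_add_Icc f htu huv (mem_univ u)).symm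
    _ ≤ ENNReal.ofReal (c * infDist (f t) S) +
        ENNReal.ofReal (C * ((1 + c) * infDist (f t) S)) :=
      add_le_add h₁ (h₂.trans (ENNReal.ofReal_le_ofReal (by gcongr)))
    _ = ENNReal.ofReal ((c + C * (1 + c)) * infDist (f t) S) := by
      rw [← ENNReal.ofReal_add (by positivity) (by positivity)]
      ring_nf

theorem eVariationOn_Icc_natCast_le_of_geometric {E : Type*} [PseudoEMetricSpace E] {f : ℝ → E}
    {N : ℕ} {d : ℕ → ℝ} {b c : ℝ} (hb : b < 1) (hc : 0 ≤ c) (hd : ∀ k, 0 ≤ d k)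
    (hpiece : ∀ k < N, eVariationOn f (Icc (k : ℝ) (k + 1)) ≤ ENNReal.ofReal (c * d k))
    (hgeom : ∀ k < N, d (k + 1) ≤ b * d k) {k : ℕ} (hk : k ≤ N) :
    eVariationOn f (Icc (k : ℝ) N) ≤ ENNReal.ofReal (c / (1 - b) * d k) := by
  induction hk using Nat.decreasingInduction with
  | self => simp
  | of_succ k hk ih =>
    have h1b : 0 < 1 - b := sub_pos.2 hb
    have hdk := hd k
    have hdk1 := hd (k + 1)
    push_cast at ih
    calc eVariationOn f (Icc (k : ℝ) N)
        = eVariationOn f (Icc (k : ℝ) (k + 1)) + eVariationOn f (Icc ((k : ℝ) + 1) N) := by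
          simpa using (eVariationOn.Icc_add_Icc f (by linarith) (by exact_mod_cast hk)
            (mem_univ _)).symm
      _ ≤ ENNReal.ofReal (c * d k) + ENNReal.ofReal (c / (1 - b) * d (k + 1)) :=
        add_le_add (hpiece k hk) ih
      _ = ENNReal.ofReal (c * d k + c / (1 - b) * d (k + 1)) :=
        (ENNReal.ofReal_add (by positivity) (by positivity)).symm
      _ ≤ ENNReal.ofReal (c / (1 - b) * d k) := by
        refine ENNReal.ofReal_le_ofReal ?_
        calc c * d k + c / (1 - b) * d (k + 1) ≤ c * d k + c / (1 - b) * (b * d k) := by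
              gcongr; exact hgeom k hk
          _ = c / (1 - b) * d k := by field_simp; ring

theorem isJohnCurve_of_geometric {Ω : Set X} {f : ℝ → X} {N : ℕ} {b c : ℝ} (hb : b < 1)
    (hc : 0 ≤ c) (hcont : ContinuousOn f (Icc 0 N))
    (hpiece : ∀ k < N, ∀ t ∈ Icc (k : ℝ) (k + 1),
      eVariationOn f (Icc t (k + 1)) ≤ ENNReal.ofReal (c * infDist (f t) (frontier Ω)))
    (hgeom : ∀ k < N, infDist (f (k + 1)) (frontier Ω) ≤ b * infDist (f k) (frontier Ω)) :
    Paper.IsJohnCurve Ω (c + c / (1 - b) * (1 + c)) f 0 N := by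
  have htail (k : ℕ) (hk : k ≤ N) : eVariationOn f (Icc (k : ℝ) N) ≤
      ENNReal.ofReal (c / (1 - b) * infDist (f k) (frontier Ω)) :=
    eVariationOn_Icc_natCast_le_of_geometric hb hc (fun _ ↦ infDist_nonneg)
      (fun k hk ↦ hpiece k hk k ⟨le_rfl, by linarith⟩) (by exact_mod_cast hgeom) hk
  have hall : ∀ t ∈ Icc (0 : ℝ) N, eVariationOn f (Icc t N) ≤
      ENNReal.ofReal ((c + c / (1 - b) * (1 + c)) * infDist (f t) (frontier Ω)) := by
    rintro t ⟨ht0, htN⟩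
    obtain htN | rfl := htN.lt_or_eq
    · have hk : ⌊t⌋₊ < N := (Nat.floor_lt ht0).2 htN
      have htk : t ∈ Icc (⌊t⌋₊ : ℝ) (⌊t⌋₊ + 1) :=
        ⟨Nat.floor_le ht0, (Nat.lt_floor_add_one t).le⟩
      have htail' := htail (⌊t⌋₊ + 1) hk
      push_cast at htail'
      exact eVariationOn_Icc_le_infDist_of_split htk.2 (by exact_mod_cast hk) hc
        (div_nonneg hc (sub_pos.2 hb).le) (hpiece _ hk t htk) htail'
    · simp
  exact ⟨hcont, (hall 0 ⟨le_rfl, N.cast_nonneg⟩).trans_lt ENNReal.ofReal_lt_top, hall⟩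

end John

theorem john_curve_concatenation_general {X : Type*} [MetricSpace X] (Ω : Set X)
    (b c₁ : ℝ) (hb : b ∈ Set.Ioo (0:ℝ) 1) (hc₁ : 1 ≤ c₁)
    (N : ℕ) (x : ℕ → X) (γ : ℕ → ℝ → X)
    (hgeom : ∀ k < N, Metric.infDist (x (k+1)) (frontier Ω) ≤
      b * Metric.infDist (x k) (frontier Ω))
    (hJohn : ∀ k < N, Paper.IsJohnCurve Ω c₁ (γ k) 0 1 ∧ γ k 0 = x k ∧ γ k 1 = x (k+1)) :
    Paper.IsJohnCurve Ω (2 * c₁ ^ 2 / (1 - b) + c₁)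
      (fun t : ℝ => if t < (N : ℝ) then γ ⌊t⌋₊ (t - (⌊t⌋₊ : ℝ)) else x N) 0 N ∧
    (fun t : ℝ => if t < (N : ℝ) then γ ⌊t⌋₊ (t - (⌊t⌋₊ : ℝ)) else x N) 0 = x 0 ∧
    (fun t : ℝ => if t < (N : ℝ) then γ ⌊t⌋₊ (t - (⌊t⌋₊ : ℝ)) else x N) N = x N := by
  have h₀ (k : ℕ) (hk : k < N) : γ k 0 = x k := (hJohn k hk).2.1
  have h₁ (k : ℕ) (hk : k < N) : γ k 1 = x (k + 1) := (hJohn k hk).2.2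
  have hpiece : ∀ k < N, ∀ t ∈ Icc (k : ℝ) (k + 1),
      eVariationOn (concatCurves γ N (x N)) (Icc t (k + 1)) ≤
        ENNReal.ofReal (c₁ * infDist (concatCurves γ N (x N) t) (frontier Ω)) := by
    intro k hk t ht
    rw [eVariationOn_concatCurves h₀ h₁ hk ht, concatCurves_eq_of_mem_Icc h₀ h₁ hk ht]
    exact (hJohn k hk).1.2.2 _ ⟨sub_nonneg.2 ht.1, by linarith [ht.2]⟩
  have hnodes : ∀ k < N, infDist (concatCurves γ N (x N) (k + 1)) (frontier Ω) ≤
      b * infDist (concatCurves γ N (x N) k) (frontier Ω) := by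
    intro k hk
    have hk1 := concatCurves_natCast h₀ h₁ (Nat.succ_le_of_lt hk)
    push_cast at hk1
    rw [hk1, concatCurves_natCast h₀ h₁ hk.le]
    exact hgeom k hk
  have hconst : c₁ + c₁ / (1 - b) * (1 + c₁) ≤ 2 * c₁ ^ 2 / (1 - b) + c₁ := by
    have hc₁sq : c₁ * (1 + c₁) ≤ 2 * c₁ ^ 2 := by nlinarith
    rw [div_mul_eq_mul_div]
    linarith [div_le_div_of_nonneg_right hc₁sq (sub_pos.2 hb.2).le]
  have hstart := concatCurves_natCast h₀ h₁ N.zero_le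
  rw [Nat.cast_zero] at hstart
  exact ⟨(isJohnCurve_of_geometric hb.2 (zero_le_one.trans hc₁)
    (continuousOn_concatCurves (fun k hk ↦ (hJohn k hk).1.1) h₀ h₁) hpiece hnodes).mono hconst,
    hstart, concatCurves_natCast h₀ h₁ le_rfl⟩

theorem john_curve_concatenation {X : Type*} [MetricSpace X] (Ω : Set X) (hΩ : IsOpen Ω)
    (b c₁ : ℝ) (hb : b ∈ Set.Ioo (0:ℝ) 1) (hc₁ : 1 ≤ c₁)
    (N : ℕ) (hN : 1 ≤ N) (x : ℕ → X) (γ : ℕ → ℝ → X)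
    (hxΩ : ∀ k < N, x k ∈ Ω) (hxN : x N ∈ closure Ω)
    (hgeom : ∀ k < N, Metric.infDist (x (k+1)) (frontier Ω) ≤
      b * Metric.infDist (x k) (frontier Ω))
    (hJohn : ∀ k < N, Paper.IsJohnCurve Ω c₁ (γ k) 0 1 ∧ γ k 0 = x k ∧ γ k 1 = x (k+1)) :
    Paper.IsJohnCurve Ω (2 * c₁ ^ 2 / (1 - b) + c₁)
      (fun t : ℝ => if t < (N : ℝ) then γ ⌊t⌋₊ (t - (⌊t⌋₊ : ℝ)) else x N) 0 N ∧
    (fun t : ℝ => if t < (N : ℝ) then γ ⌊t⌋₊ (t - (⌊t⌋₊ : ℝ)) else x N) 0 = x 0 ∧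
    (fun t : ℝ => if t < (N : ℝ) then γ ⌊t⌋₊ (t - (⌊t⌋₊ : ℝ)) else x N) N = x N :=
  john_curve_concatenation_general Ω b c₁ hb hc₁ N x γ hgeom hJohn
end
end

section
/- Let Ω ⊊ X be an open subset of a geodesic complete metric space, let x₀ ∈ Ω with r₀ = d(x₀, ∂Ω), and let c ≥ 2C₁ for some C₁ ≥ 1. Suppose x ∈ B(x₀, 2r₀) \ Ω and γ: [0,1] → X is a rectifiable curve from x₀ to x satisfying ℓ(γ|_{[t,1]}) ≤ C₁ d(γ(t), x) for all t, and suppose γ is not a c-John curve from x₀. Then there exists t* ∈ (0,1) with γ(t*) ∈ Ω such that (i) d(γ(t*), X\Ω) ≤ (1/c) ℓ(γ|_{[t*,1]}), and (ii) the restriction γ|_{[0,t*]} is a c-John curve from x₀ to γ(t*); moreover d(γ(t*), ∂Ω) ≤ (C₁/c) d(γ(t*), x). -/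
open Metric Set MeasureTheory ENNReal

noncomputable section

/-!
Let `t*` be the first time at which `c · d(γ t, X ∖ Ω) ≤ ℓ(γ|[t,1])`; it exists because the left
side is continuous and the right side is antitone in `t`, and `t = 1` qualifies. Before `t*` the
strict reverse inequality holds, which together with `d(·, X ∖ Ω) ≤ d(·, ∂Ω)` is the John condition
on `[0, t*]`. The assumptions `x ∈ B(x₀, 2 r₀)` and `c ≥ 2 C₁` rule out `t* = 0`. If `γ t*` were
outside `Ω`, letting `t ↑ t*` would force `ℓ(γ|[t*,1]) = 0`, making `γ` a `c`-John curve on all of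
`[0, 1]`. Finally, in a geodesic space `d(z, ∂Ω) ≤ d(z, X ∖ Ω)` for `z ∈ Ω` (a geodesic from `z` to
a point outside `Ω` crosses `∂Ω`), so the tail bound at `t*` gives the last estimate.
-/

open Filter Topology

theorem IsPreconnected.inter_frontier_nonempty {α : Type*} [TopologicalSpace α] {s t : Set α}
    (hs : IsPreconnected s) (hst : (s ∩ t).Nonempty) (hst' : (s \ t).Nonempty) :
    (s ∩ frontier t).Nonempty := by
  by_contra hempty
  have hcover : s ⊆ interior t ∪ (closure t)ᶜ := fun p hp => by
    by_cases hpt : p ∈ closure t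
    · exact .inl (by_contra fun hint => hempty ⟨p, hp, hpt, hint⟩)
    · exact .inr hpt
  have hdisj : Disjoint (interior t) (closure t)ᶜ :=
    disjoint_compl_right.mono_left (interior_subset.trans subset_closure)
  obtain ⟨p, hps, hpt⟩ := hst
  obtain ⟨q, hqs, hqt⟩ := hst'
  rcases hs.subset_or_subset isOpen_interior isClosed_closure.isOpen_compl hdisj hcover with
    hsub | hsub
  · exact hqt (interior_subset (hsub hqs))
  · exact hsub hps (subset_closure hpt)

section FirstCrossing

variable {α β : Type*} [ConditionallyCompleteLinearOrder α] [TopologicalSpace α] [OrderTopology α]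
  [LinearOrder β] [TopologicalSpace β] [OrderTopology β] {f g : α → β} {a b : α}

theorem exists_first_le_of_continuousOn_of_antitone (hab : a ≤ b) (hf : ContinuousOn f (Icc a b))
    (hg : Antitone g) (hb : f b ≤ g b) :
    ∃ t ∈ Icc a b, f t ≤ g t ∧ ∀ s ∈ Ico a t, g s < f s := by
  set S := {t ∈ Icc a b | f t ≤ g t}
  have hbS : b ∈ S := ⟨⟨hab, le_rfl⟩, hb⟩
  have hS : BddBelow S := ⟨a, fun t ht => ht.1.1⟩
  have ht₀ : sInf S ∈ Icc a b := ⟨le_csInf ⟨b, hbS⟩ fun t ht => ht.1.1, csInf_le hS hbS⟩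
  refine ⟨sInf S, ht₀, ?_, fun s hs => not_le.1 fun hfg => hs.2.not_ge (csInf_le hS ⟨?_, hfg⟩)⟩
  · by_contra! hlt
    have hnear : ∀ᶠ t in 𝓝[S] sInf S, g (sInf S) < f t :=
      nhdsWithin_mono _ (fun t ht => ht.1) (hf _ ht₀ (Ioi_mem_nhds hlt))
    have := mem_closure_iff_nhdsWithin_neBot.1 (csInf_mem_closure ⟨b, hbS⟩ hS)
    obtain ⟨u, hgu, hu⟩ := (hnear.and self_mem_nhdsWithin).exists
    exact (hu.2.trans (hg (csInf_le hS hu))).not_gt hgu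
  · exact ⟨hs.1, hs.2.le.trans ht₀.2⟩

theorem le_of_forall_le_of_continuousWithinAt_of_antitone [DenselyOrdered α] (hab : a < b)
    (hf : ContinuousWithinAt f (Ico a b) b) (hg : Antitone g) (h : ∀ s ∈ Ico a b, g s ≤ f s) :
    g b ≤ f b :=
  haveI := right_nhdsWithin_Ico_neBot hab
  ge_of_tendsto hf (eventually_nhdsWithin_of_forall fun s hs => (hg hs.2.le).trans (h s hs))

end FirstCrossing

theorem Metric.infDist_compl_le_infDist_frontier {X : Type*} [MetricSpace X] {Ω : Set X} {z : X}
    (hΩ : (frontier Ω).Nonempty) : infDist z Ωᶜ ≤ infDist z (frontier Ω) := by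
  rw [← infDist_closure]
  exact infDist_le_infDist_of_subset
    (frontier_eq_closure_inter_closure.trans_subset inter_subset_right) hΩ

namespace Paper

variable {X : Type*} [MetricSpace X] {Ω : Set X}

namespace GeodesicSpace

theorem exists_mem_frontier_dist_le (hgeo : GeodesicSpace X) {z y : X}
    (hz : z ∈ Ω) (hy : y ∉ Ω) : ∃ w ∈ frontier Ω, dist z w ≤ dist z y := by
  obtain ⟨σ, hσ0, hσ1, hσc, hσlen⟩ := hgeo z y
  obtain ⟨_, ⟨s, hs, rfl⟩, hsΩ⟩ := (isPreconnected_Icc.image σ hσc).inter_frontier_nonempty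
    ⟨z, ⟨0, left_mem_Icc.2 zero_le_one, hσ0⟩, hz⟩ ⟨y, ⟨1, right_mem_Icc.2 zero_le_one, hσ1⟩, hy⟩
  refine ⟨σ s, hsΩ, ?_⟩
  have := eVariationOn.edist_le σ (left_mem_Icc.2 zero_le_one) hs
  rwa [hσ0, hσlen, edist_dist, ENNReal.ofReal_le_ofReal_iff dist_nonneg] at this

theorem infDist_frontier_le_infDist_compl (hgeo : GeodesicSpace X) {z : X}
    (hz : z ∈ Ω) : infDist z (frontier Ω) ≤ infDist z Ωᶜ := by
  rcases Ωᶜ.eq_empty_or_nonempty with hempty | hne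
  · simp [compl_empty_iff.1 hempty]
  · refine (le_infDist hne).2 fun y hy => ?_
    obtain ⟨w, hw, hzw⟩ := hgeo.exists_mem_frontier_dist_le hz hy
    exact (infDist_le_dist_of_mem hw).trans hzw

theorem mul_dist_lt_mul_infDist_compl (hgeo : GeodesicSpace X) {x₀ x : X} {C₁ c : ℝ}
    (hx₀ : x₀ ∈ Ω) (hC₁ : 0 < C₁) (hc : 2 * C₁ ≤ c)
    (hx : x ∈ ball x₀ (2 * infDist x₀ (frontier Ω))) :
    C₁ * dist x₀ x < c * infDist x₀ Ωᶜ :=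
  calc C₁ * dist x₀ x < C₁ * (2 * infDist x₀ (frontier Ω)) :=
        mul_lt_mul_of_pos_left (mem_ball'.1 hx) hC₁
    _ = 2 * C₁ * infDist x₀ (frontier Ω) := by ring
    _ ≤ c * infDist x₀ (frontier Ω) := by gcongr; exact infDist_nonneg
    _ ≤ c * infDist x₀ Ωᶜ :=
        mul_le_mul_of_nonneg_left (hgeo.infDist_frontier_le_infDist_compl hx₀) (by linarith)

end GeodesicSpace

section Curves

variable {γ : ℝ → X} {c a b : ℝ}

theorem antitone_eVariationOn_Icc : Antitone fun t => eVariationOn γ (Icc t b) :=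
  fun _ _ hst => eVariationOn.mono γ (Icc_subset_Icc_left hst)

theorem continuousOn_ofReal_mul_infDist {s : Set ℝ} (hcont : ContinuousOn γ s) :
    ContinuousOn (fun t => ENNReal.ofReal (c * infDist (γ t) Ωᶜ)) s :=
  (ENNReal.continuous_ofReal.comp (continuous_const.mul (continuous_infDist_pt _))).comp_continuousOn
    hcont

theorem exists_first_exit (hab : a ≤ b) (hcont : ContinuousOn γ (Icc a b)) (hb : γ b ∉ Ω) :
    ∃ t ∈ Icc a b, ENNReal.ofReal (c * infDist (γ t) Ωᶜ) ≤ eVariationOn γ (Icc t b) ∧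
      ∀ s ∈ Ico a t, eVariationOn γ (Icc s b) < ENNReal.ofReal (c * infDist (γ s) Ωᶜ) :=
  exists_first_le_of_continuousOn_of_antitone hab (continuousOn_ofReal_mul_infDist hcont)
    antitone_eVariationOn_Icc (by simp [infDist_zero_of_mem (mem_compl hb)])

theorem isJohnCurve_of_forall_le_infDist_compl (hc : 0 ≤ c) (hΩ : (frontier Ω).Nonempty) (hcont : ContinuousOn γ (Icc a b))
    (hfin : eVariationOn γ (Icc a b) < ⊤)
    (h : ∀ t ∈ Ico a b, eVariationOn γ (Icc t b) ≤ ENNReal.ofReal (c * infDist (γ t) Ωᶜ)) :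
    IsJohnCurve Ω c γ a b := by
  refine ⟨hcont, hfin, fun t ht => ?_⟩
  rcases ht.2.lt_or_eq with htb | rfl
  · exact (h t ⟨ht.1, htb⟩).trans <| ENNReal.ofReal_le_ofReal <|
      mul_le_mul_of_nonneg_left (infDist_compl_le_infDist_frontier hΩ) hc
  · simp [eVariationOn.subsingleton]

theorem mem_of_not_isJohnCurve_of_forall_lt {t : ℝ} (hc : 0 ≤ c) (hΩ : (frontier Ω).Nonempty)
    (hcont : ContinuousOn γ (Icc a b)) (hfin : eVariationOn γ (Icc a b) < ⊤)
    (hγ : ¬ IsJohnCurve Ω c γ a b) (ht : t ∈ Ioc a b)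
    (hbefore : ∀ s ∈ Ico a t, eVariationOn γ (Icc s b) < ENNReal.ofReal (c * infDist (γ s) Ωᶜ)) :
    γ t ∈ Ω := by
  by_contra hout
  -- the tail length is squeezed below `c · d(γ s, Ωᶜ)`, which tends to `0` as `s ↑ t`
  have hzero : eVariationOn γ (Icc t b) = 0 := by
    simpa [infDist_zero_of_mem (mem_compl hout)] using
      le_of_forall_le_of_continuousWithinAt_of_antitone ht.1
        (continuousOn_ofReal_mul_infDist hcont t (Ioc_subset_Icc_self ht) |>.mono
          fun s hs => ⟨hs.1, hs.2.le.trans ht.2⟩)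
        antitone_eVariationOn_Icc fun s hs => (hbefore s hs).le
  refine hγ (isJohnCurve_of_forall_le_infDist_compl hc hΩ hcont hfin fun s hs => ?_)
  rcases lt_or_ge s t with hst | hts
  · exact (hbefore s ⟨hs.1, hst⟩).le
  · exact (antitone_eVariationOn_Icc hts).trans (hzero.le.trans zero_le)

end Curves

end Paper

theorem exit_time_john_general {X : Type*} [MetricSpace X]
    (hgeo : Paper.GeodesicSpace X)
    (Ω : Set X)
    (x₀ : X) (hx₀ : x₀ ∈ Ω)
    (C₁ c : ℝ) (hC₁ : 1 ≤ C₁) (hc : 2 * C₁ ≤ c)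
    (x : X) (hx : x ∈ Metric.ball x₀ (2 * Metric.infDist x₀ (frontier Ω)) \ Ω)
    (γ : ℝ → X) (hcont : ContinuousOn γ (Set.Icc 0 1))
    (h0 : γ 0 = x₀) (h1 : γ 1 = x)
    (htail : ∀ t ∈ Set.Icc (0:ℝ) 1,
      eVariationOn γ (Set.Icc t 1) ≤ ENNReal.ofReal (C₁ * dist (γ t) x))
    (hnotJohn : ¬ Paper.IsJohnCurve Ω c γ 0 1) :
    ∃ t ∈ Set.Ioo (0:ℝ) 1, γ t ∈ Ω ∧
      ENNReal.ofReal (c * Metric.infDist (γ t) Ωᶜ) ≤ eVariationOn γ (Set.Icc t 1) ∧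
      Paper.IsJohnCurve Ω c γ 0 t ∧
      Metric.infDist (γ t) (frontier Ω) ≤ (C₁ / c) * dist (γ t) x := by
  obtain ⟨hxball, hxΩ⟩ := hx
  have hc₀ : 0 < c := by linarith
  have hfront : (frontier Ω).Nonempty :=
    let ⟨w, hw, _⟩ := hgeo.exists_mem_frontier_dist_le hx₀ hxΩ; ⟨w, hw⟩
  have hfin : eVariationOn γ (Icc 0 1) < ⊤ :=
    (htail 0 (left_mem_Icc.2 zero_le_one)).trans_lt ofReal_lt_top
  obtain ⟨t₀, ht₀, hexit, hbefore⟩ := Paper.exists_first_exit (c := c) zero_le_one hcont (h1 ▸ hxΩ)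
  have ht₀pos : 0 < t₀ := by
    refine ht₀.1.lt_of_ne ?_
    rintro rfl
    have hle := hexit.trans (htail 0 ht₀)
    rw [ENNReal.ofReal_le_ofReal_iff (mul_nonneg (by linarith) dist_nonneg), h0] at hle
    exact hle.not_gt (hgeo.mul_dist_lt_mul_infDist_compl hx₀ (by linarith) hc hxball)
  have hmem : γ t₀ ∈ Ω := Paper.mem_of_not_isJohnCurve_of_forall_lt hc₀.le hfront hcont hfin
    hnotJohn ⟨ht₀pos, ht₀.2⟩ hbefore
  have ht₀lt : t₀ < 1 := ht₀.2.lt_of_ne (by rintro rfl; exact hxΩ (h1 ▸ hmem))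
  have hsub : Icc 0 t₀ ⊆ Icc 0 1 := Icc_subset_Icc_right ht₀.2
  refine ⟨t₀, ⟨ht₀pos, ht₀lt⟩, hmem, hexit, ?_, ?_⟩
  · exact Paper.isJohnCurve_of_forall_le_infDist_compl hc₀.le hfront (hcont.mono hsub)
      ((eVariationOn.mono γ hsub).trans_lt hfin) fun t ht =>
        (eVariationOn.mono γ (Icc_subset_Icc_right ht₀.2)).trans (hbefore t ht).le
  · have hkey := hexit.trans (htail t₀ ht₀)
    rw [ENNReal.ofReal_le_ofReal_iff (mul_nonneg (by linarith) dist_nonneg)] at hkey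
    rw [div_mul_eq_mul_div, le_div_iff₀ hc₀]
    nlinarith [hgeo.infDist_frontier_le_infDist_compl hmem]

theorem exit_time_john {X : Type*} [MetricSpace X] [CompleteSpace X]
    (hgeo : Paper.GeodesicSpace X)
    (Ω : Set X) (hΩ : IsOpen Ω) (hproper : Ω ≠ Set.univ)
    (x₀ : X) (hx₀ : x₀ ∈ Ω)
    (C₁ c : ℝ) (hC₁ : 1 ≤ C₁) (hc : 2 * C₁ ≤ c)
    (x : X) (hx : x ∈ Metric.ball x₀ (2 * Metric.infDist x₀ (frontier Ω)) \ Ω)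
    (γ : ℝ → X) (hcont : ContinuousOn γ (Set.Icc 0 1))
    (h0 : γ 0 = x₀) (h1 : γ 1 = x) (hrect : eVariationOn γ (Set.Icc 0 1) < ⊤)
    (htail : ∀ t ∈ Set.Icc (0:ℝ) 1,
      eVariationOn γ (Set.Icc t 1) ≤ ENNReal.ofReal (C₁ * dist (γ t) x))
    (hnotJohn : ¬ Paper.IsJohnCurve Ω c γ 0 1) :
    ∃ t ∈ Set.Ioo (0:ℝ) 1, γ t ∈ Ω ∧
      ENNReal.ofReal (c * Metric.infDist (γ t) Ωᶜ) ≤ eVariationOn γ (Set.Icc t 1) ∧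
      Paper.IsJohnCurve Ω c γ 0 t ∧
      Metric.infDist (γ t) (frontier Ω) ≤ (C₁ / c) * dist (γ t) x :=
  exit_time_john_general hgeo Ω x₀ hx₀ C₁ c hC₁ hc x hx γ hcont h0 h1 htail hnotJohn
end
end

section
/- Let (X,d,μ) be a geodesic space with doubling measure. Let ℬ be a countable collection of balls, z ∈ X, and suppose that for all r in an interval (0,R] one has h_p(ℬ|_{B(z,r)}) ≤ ε₀ h_p(B(z,r)), where ℬ|_A = {B ∈ ℬ : B ∩ A ≠ ∅}. Define g = sup_{B ∈ ℬ} (1/rad(B)) 1_{2B}, and assume z ∉ ⋃{4B : B ∈ ℬ}. Then for all r ∈ (0, R/2], the mean ∫̄_{B(z,r)} g^p dμ ≤ D² ε₀ / (2r)^p, where D is the doubling constant of μ and h_p(B) = μ(B)/rad(B)^p. -/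
open Metric Set MeasureTheory ENNReal

noncomputable section

theorem sparse_implies_small_mean {X : Type*} [MetricSpace X] [MeasurableSpace X]
    (μ : Measure X) (D : ℝ≥0∞) (hD : 1 ≤ D) (hμ : Paper.DoublingMeasure μ D)
    (hgeo : Paper.GeodesicSpace X)
    (p : ℝ) (hp : 0 < p)
    (ℬ : Set (X × ℝ)) (hcount : ℬ.Countable) (hpos : ∀ B ∈ ℬ, 0 < B.2)
    (z : X) (R : ℝ) (hR : 0 < R) (ε₀ : ℝ≥0∞)
    (hsparse : ∀ r ∈ Set.Ioc (0:ℝ) R,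
      Paper.hSum μ p (Paper.restr ℬ (Metric.ball z r)) ≤ ε₀ * Paper.hGauge μ p z r)
    (hz : ∀ B ∈ ℬ, z ∉ Metric.ball B.1 (4 * B.2)) :
    ∀ r ∈ Set.Ioc (0:ℝ) (R / 2),
      (∫⁻ w in Metric.ball z r, Paper.ballSup ℬ w ^ p ∂μ) / μ (Metric.ball z r) ≤
        D ^ 2 * ε₀ / ENNReal.ofReal ((2 * r) ^ p) := by
  intro r hr
  obtain ⟨hr0, hrR⟩ := hr
  set C := Paper.restr ℬ (Metric.ball z (2 * r)) with hCdef
  have hCsub : C ⊆ ℬ := fun B hB => hB.1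
  have hCc : C.Countable := hcount.mono hCsub
  haveI : Countable C := hCc.to_subtype
  -- membership in C
  have hmem : ∀ B ∈ ℬ, ∀ w ∈ Metric.ball z r,
      w ∈ Metric.ball B.1 (2 * B.2) → B ∈ C := by
    intro B hB w hw hw2
    have hB2 : 0 < B.2 := hpos B hB
    have h4 : 4 * B.2 ≤ dist z B.1 := by
      by_contra h
      exact hz B hB (Metric.mem_ball.2 (by push_neg at h; linarith [h]))
    have hwz : dist w z < r := Metric.mem_ball.1 hw
    have hwB : dist w B.1 < 2 * B.2 := Metric.mem_ball.1 hw2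
    have hd : dist z B.1 < r + 2 * B.2 := by
      calc dist z B.1 ≤ dist z w + dist w B.1 := dist_triangle _ _ _
        _ < r + 2 * B.2 := by rw [dist_comm z w]; linarith
    refine ⟨hB, ⟨B.1, Metric.mem_ball_self hB2, Metric.mem_ball.2 ?_⟩⟩
    rw [dist_comm]
    linarith
  set c : X × ℝ → ℝ≥0∞ := fun B => (ENNReal.ofReal B.2)⁻¹ ^ p with hcdef
  set F : X → ℝ≥0∞ := fun w => ∑' B : C,
      (MeasureTheory.toMeasurable μ
        (Metric.ball (B : X × ℝ).1 (2 * (B : X × ℝ).2))).indicator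
        (fun _ => c (B : X × ℝ)) w with hFdef
  have hFmeas : Measurable F :=
    Measurable.ennreal_tsum fun B =>
      measurable_const.indicator (measurableSet_toMeasurable μ _)
  -- pointwise bound on the ball
  have hpt : ∀ w ∈ Metric.ball z r, Paper.ballSup ℬ w ^ p ≤ F w := by
    intro w hw
    have h1 : Paper.ballSup ℬ w ≤ F w ^ (1 / p) := by
      refine iSup_le fun B => iSup_le fun hwB => ?_
      obtain ⟨B, hB⟩ := B
      have hBC : B ∈ C := hmem B hB w hw hwB
      have hle : c B ≤ F w := by
        have h := ENNReal.le_tsum (f := fun B : C =>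
          (MeasureTheory.toMeasurable μ
            (Metric.ball (B : X × ℝ).1 (2 * (B : X × ℝ).2))).indicator
            (fun _ => c (B : X × ℝ)) w) ⟨B, hBC⟩
        rwa [Set.indicator_of_mem (MeasureTheory.subset_toMeasurable μ _ hwB)] at h
      calc (ENNReal.ofReal B.2)⁻¹ = c B ^ (1 / p) := by
            rw [hcdef, ← ENNReal.rpow_mul, mul_one_div_cancel hp.ne', ENNReal.rpow_one]
        _ ≤ F w ^ (1 / p) := ENNReal.rpow_le_rpow hle (by positivity)
    calc Paper.ballSup ℬ w ^ p ≤ (F w ^ (1 / p)) ^ p := ENNReal.rpow_le_rpow h1 hp.le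
      _ = F w := by
          rw [← ENNReal.rpow_mul, one_div_mul_cancel hp.ne', ENNReal.rpow_one]
  have h2r0 : 0 < 2 * r := by linarith
  have hball := hμ z r hr0
  set m := μ (Metric.ball z r) with hmdef
  set cc := ENNReal.ofReal ((2 * r) ^ p) with hccdef
  -- the integral bound
  have hint : (∫⁻ w in Metric.ball z r, Paper.ballSup ℬ w ^ p ∂μ) ≤
      D ^ 2 * ε₀ / cc * m := by
    calc (∫⁻ w in Metric.ball z r, Paper.ballSup ℬ w ^ p ∂μ)
        ≤ ∫⁻ w in Metric.ball z r, F w ∂μ :=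
          MeasureTheory.setLIntegral_mono hFmeas hpt
      _ ≤ ∫⁻ w, F w ∂μ := MeasureTheory.setLIntegral_le_lintegral _ _
      _ = ∑' B : C, c (B : X × ℝ) *
            μ (Metric.ball (B : X × ℝ).1 (2 * (B : X × ℝ).2)) := by
          rw [hFdef, MeasureTheory.lintegral_tsum fun B =>
            (measurable_const.indicator (measurableSet_toMeasurable μ _)).aemeasurable]
          refine tsum_congr fun B => ?_
          rw [MeasureTheory.lintegral_indicator (measurableSet_toMeasurable μ _),
            MeasureTheory.setLIntegral_const, MeasureTheory.measure_toMeasurable]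
      _ ≤ ∑' B : C, D * Paper.hGauge μ p (B : X × ℝ).1 (B : X × ℝ).2 := by
          refine ENNReal.tsum_le_tsum fun B => ?_
          have hB2 : 0 < (B : X × ℝ).2 := hpos _ (hCsub B.2)
          have hdb := (hμ (B : X × ℝ).1 (B : X × ℝ).2 hB2).2.2
          calc c (B : X × ℝ) * μ (Metric.ball (B : X × ℝ).1 (2 * (B : X × ℝ).2))
              ≤ c (B : X × ℝ) * (D * μ (Metric.ball (B : X × ℝ).1 (B : X × ℝ).2)) :=
                mul_le_mul_right hdb _
            _ = D * Paper.hGauge μ p (B : X × ℝ).1 (B : X × ℝ).2 := by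
                simp only [hcdef, Paper.hGauge]
                rw [ENNReal.inv_rpow, ENNReal.ofReal_rpow_of_pos hB2, div_eq_mul_inv]
                ring
      _ = D * Paper.hSum μ p C := by rw [ENNReal.tsum_mul_left]; rfl
      _ ≤ D * (ε₀ * Paper.hGauge μ p z (2 * r)) :=
          mul_le_mul_right (hsparse (2 * r) ⟨h2r0, by linarith⟩) _
      _ ≤ D * (ε₀ * (D * m / cc)) := by
          refine mul_le_mul_right (mul_le_mul_right ?_ _) _
          rw [Paper.hGauge, ← hccdef]
          exact ENNReal.div_le_div_right hball.2.2 _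
      _ = D ^ 2 * ε₀ / cc * m := by
          simp only [div_eq_mul_inv, pow_two]
          ring
  rw [ENNReal.div_le_iff hball.1.ne' hball.2.1.ne]
  exact hint
end
end

section
/- Reduction to scale-1 hypothesis: Let (X,d,μ) be a complete geodesic metric measure space with μ doubling, let ξ be a doubling gauge function with doubling constant D, and let Ĉ > 1. Suppose Ω ⊂ X is a domain such that for all x ∈ Ω, H^ξ_{d(x,∂Ω)}(B(x, Ĉ d(x,∂Ω)) \ Ω) ≥ δ ξ(B(x, d(x,∂Ω))). Then there exist constants C' (depending on Ĉ and D) such that for all x₀ ∈ Ω, H^ξ_{d(x₀,∂Ω)}(B(x₀, 2 d(x₀,∂Ω)) \ Ω) ≥ C'⁻¹ δ ξ(B(x₀, d(x₀,∂Ω))). -/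
open Metric Set MeasureTheory ENNReal

noncomputable section

/-!
From `x₀` follow a geodesic towards an almost nearest point of `∂Ω` until the distance to `∂Ω`
has dropped to `s = d(x₀, ∂Ω) / Ĉ`. The point `x` reached lies in `Ω`, and
`B(x, Ĉ s) ⊆ B(x₀, 2 d(x₀, ∂Ω))`. A cover of `B(x₀, 2 d(x₀, ∂Ω)) \ Ω` by balls of radius at most
`d(x₀, ∂Ω)` either covers `B(x, Ĉ s) \ Ω` by balls of radius at most `s`, and the hypothesis at `x`
bounds its mass from below, or it contains a ball of radius in `(s, d(x₀, ∂Ω)]` meeting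
`B(x₀, 2 d(x₀, ∂Ω))`, whose gauge is comparable to `ξ(x₀, d(x₀, ∂Ω))` by doubling.
-/

namespace Paper

section Gauge

variable {X : Type*} {ξ : X → ℝ → ℝ≥0∞}

lemma gaugeSum_mono {C₁ C₂ : Set (X × ℝ)} (h : C₁ ⊆ C₂) : gaugeSum ξ C₁ ≤ gaugeSum ξ C₂ := by
  unfold gaugeSum
  rw [tsum_subtype C₁ (fun B => ξ B.1 B.2), tsum_subtype C₂ (fun B => ξ B.1 B.2)]
  exact ENNReal.tsum_le_tsum (indicator_le_indicator_of_subset h fun _ => zero_le)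

lemma le_gaugeSum {C : Set (X × ℝ)} {B : X × ℝ} (hB : B ∈ C) : ξ B.1 B.2 ≤ gaugeSum ξ C :=
  ENNReal.le_tsum (f := fun B : C => ξ (B : X × ℝ).1 (B : X × ℝ).2) ⟨B, hB⟩

variable [MetricSpace X]

/-- Comparing two intersecting balls through the intermediate ball `B(b, R/2)`. -/
lemma DoublingGauge.le_pow_mul {D : ℝ≥0∞} (hξ : DoublingGauge ξ D) (hD : 1 ≤ D) (n : ℕ) :
    ∀ (a b : X) {R r : ℝ}, 0 < r → r ≤ R → R ≤ 2 ^ n * r →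
      (ball b r ∩ ball a R).Nonempty → ξ a R ≤ D ^ (n + 1) * ξ b r := by
  induction n with
  | zero =>
    intro a b R r hr hrR hRr hmeet
    obtain rfl : R = r := le_antisymm (by simpa using hRr) hrR
    simpa using (hξ.2 a b R R hr le_rfl (by linarith) hmeet).2
  | succ n ih =>
    intro a b R r hr hrR hRr hmeet
    by_cases hR : R ≤ 2 * r
    · calc ξ a R ≤ D * ξ b r := (hξ.2 a b R r hr hrR hR hmeet).2
        _ ≤ D ^ (n + 1 + 1) * ξ b r := by gcongr; exact le_self_pow₀ hD (by omega)
    have hhalf : r ≤ R / 2 := by linarith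
    have hstep : ξ a R ≤ D * ξ b (R / 2) :=
      (hξ.2 a b R (R / 2) (by linarith) (by linarith) (by linarith)
        (hmeet.mono (inter_subset_inter_left _ (ball_subset_ball hhalf)))).2
    have hinner : ξ b (R / 2) ≤ D ^ (n + 1) * ξ b r :=
      ih b b hr hhalf (by rw [pow_succ] at hRr; linarith) ⟨b, mem_ball_self hr,
        mem_ball_self (by linarith)⟩
    calc ξ a R ≤ D * (D ^ (n + 1) * ξ b r) := hstep.trans (by gcongr)
      _ = D ^ (n + 1 + 1) * ξ b r := by ring

lemma DoublingGauge.le_pow_mul_of_inter_ball_two_mul {D : ℝ≥0∞} (hξ : DoublingGauge ξ D)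
    (hD : 1 ≤ D) (n : ℕ) {a b : X} {R r : ℝ} (hr : 0 < r) (hrR : r ≤ 2 * R)
    (hRr : R ≤ 2 ^ n * r) (hmeet : (ball b r ∩ ball a (2 * R)).Nonempty) :
    ξ a R ≤ D ^ (n + 3) * ξ b r := by
  have hR : 0 < R := by linarith [nonempty_ball.1 (hmeet.mono inter_subset_right)]
  calc ξ a R ≤ D * ξ a (2 * R) := (hξ.2 a a (2 * R) R hR (by linarith) le_rfl
        ⟨a, mem_ball_self hR, mem_ball_self (by linarith)⟩).1
    _ ≤ D * (D ^ (n + 1 + 1) * ξ b r) := by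
        gcongr
        exact hξ.le_pow_mul hD (n + 1) a b hr hrR (by rw [pow_succ]; linarith) hmeet
    _ = D ^ (n + 3) * ξ b r := by ring

lemma gaugeContent_mono {r : ℝ} {K K' : Set X} (h : K ⊆ K') :
    gaugeContent ξ r K ≤ gaugeContent ξ r K' :=
  iInf_mono fun _ => iInf_mono fun _ => iInf_mono fun _ => iInf_const_mono h.trans

/-- A cover at scale `r` either consists, near `K`, of balls of radius at most `s`, or it
contains a ball of radius in `(s, r]` that meets `K`. -/
lemma le_gaugeContent_of_le_gaugeContent_of_lt_radius {K : Set X} {s r : ℝ} {m : ℝ≥0∞}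
    (hsmall : m ≤ gaugeContent ξ s K)
    (hlarge : ∀ (b : X) (ρ : ℝ), s < ρ → ρ ≤ r → (ball b ρ ∩ K).Nonempty → m ≤ ξ b ρ) :
    m ≤ gaugeContent ξ r K := by
  refine le_iInf fun C => le_iInf fun hC => le_iInf fun hCr => le_iInf fun hCK => ?_
  by_cases hall : ∀ B ∈ restr C K, B.2 ≤ s
  · have hcov : K ⊆ ⋃ B ∈ restr C K, ball B.1 B.2 := fun p hp => by
      obtain ⟨B, hBC, hpB⟩ := mem_iUnion₂.mp (hCK hp)
      exact mem_iUnion₂.mpr ⟨B, ⟨hBC, p, hpB, hp⟩, hpB⟩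
    calc m ≤ gaugeContent ξ s K := hsmall
      _ ≤ gaugeSum ξ (restr C K) :=
        iInf₂_le_of_le (restr C K) (hC.mono fun _ hB => hB.1) <|
          iInf₂_le_of_le (fun B hB => ⟨(hCr B hB.1).1, hall B hB⟩) hcov le_rfl
      _ ≤ gaugeSum ξ C := gaugeSum_mono fun _ hB => hB.1
  · push Not at hall
    obtain ⟨B, ⟨hBC, hBK⟩, hsB⟩ := hall
    exact (hlarge B.1 B.2 hsB (hCr B hBC).2 hBK).trans (le_gaugeSum hBC)

lemma DoublingGauge.inv_pow_mul_le_gaugeContent {D : ℝ≥0∞} (hξ : DoublingGauge ξ D)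
    (hD : 1 ≤ D) (hDt : D ≠ ⊤) (k : ℕ) {Ω : Set X} {x₀ x : X} {s R : ℝ} {δ : ℝ≥0∞}
    (hs : 0 < s) (hsR : s ≤ R) (hRs : R ≤ 2 ^ k * s) (hx : dist x₀ x ≤ R) (hδ1 : δ ≤ 1)
    (hsmall : δ * ξ x s ≤ gaugeContent ξ s (ball x R \ Ω)) :
    (D ^ (k + 3))⁻¹ * δ * ξ x₀ R ≤ gaugeContent ξ R (ball x₀ (2 * R) \ Ω) := by
  have hball : ball x R ⊆ ball x₀ (2 * R) := ball_subset_ball' (by rw [dist_comm]; linarith)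
  have hcompare : ∀ b r, 0 < r → r ≤ 2 * R → R ≤ 2 ^ k * r →
      (ball b r ∩ ball x₀ (2 * R)).Nonempty → (D ^ (k + 3))⁻¹ * δ * ξ x₀ R ≤ δ * ξ b r :=
    fun b r hr hrR hRr hmeet => by
      rw [mul_right_comm, mul_comm _ δ]
      gcongr
      exact (ENNReal.inv_mul_le_iff (pow_ne_zero _ (zero_lt_one.trans_le hD).ne')
        (pow_ne_top hDt)).2 (hξ.le_pow_mul_of_inter_ball_two_mul hD k hr hrR hRr hmeet)
  refine le_trans ?_ (gaugeContent_mono (sdiff_subset_sdiff_left hball))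
  refine le_gaugeContent_of_le_gaugeContent_of_lt_radius (le_trans ?_ hsmall) ?_
  · exact hcompare x s hs (by linarith) hRs
      ⟨x, mem_ball_self hs, hball (mem_ball_self (by linarith))⟩
  · rintro b ρ hsρ hρ ⟨p, hpb, hpK⟩
    refine (hcompare b ρ (hs.trans hsρ) (by linarith) ?_ ⟨p, hpb, hball hpK.1⟩).trans
      (mul_le_of_le_one_left' hδ1)
    exact hRs.trans (by gcongr)

end Gauge

section Geodesic

variable {X : Type*} [MetricSpace X]

lemma edist_add_edist_le_eVariationOn (γ : ℝ → X) {a t b : ℝ} (hat : a ≤ t) (htb : t ≤ b) :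
    edist (γ a) (γ t) + edist (γ t) (γ b) ≤ eVariationOn γ (Icc a b) := by
  have hsplit := eVariationOn.Icc_add_Icc γ hat htb (s := univ) (mem_univ t)
  simp only [univ_inter] at hsplit
  rw [← hsplit]
  gcongr
  · exact eVariationOn.edist_le γ (left_mem_Icc.2 hat) (right_mem_Icc.2 hat)
  · exact eVariationOn.edist_le γ (left_mem_Icc.2 htb) (right_mem_Icc.2 htb)

lemma dist_add_dist_le_of_eVariationOn_eq {γ : ℝ → X}
    (hγ : eVariationOn γ (Icc 0 1) = ENNReal.ofReal (dist (γ 0) (γ 1)))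
    {t : ℝ} (ht : t ∈ Icc (0 : ℝ) 1) :
    dist (γ 0) (γ t) + dist (γ t) (γ 1) ≤ dist (γ 0) (γ 1) := by
  have h := edist_add_edist_le_eVariationOn γ ht.1 ht.2
  rwa [hγ, edist_dist, edist_dist, ← ENNReal.ofReal_add dist_nonneg dist_nonneg,
    ENNReal.ofReal_le_ofReal_iff dist_nonneg] at h

/-- The geodesic from `x` to `y` stays within `dist x y` of `x`, so it cannot cross
`frontier Ω`; being connected, it stays in `Ω`. -/
lemma GeodesicSpace.mem_of_dist_lt_infDist_frontier (hgeo : GeodesicSpace X) {Ω : Set X}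
    (hΩ : IsOpen Ω) {x y : X} (hx : x ∈ Ω) (hxy : dist x y < infDist x (frontier Ω)) :
    y ∈ Ω := by
  obtain ⟨γ, rfl, rfl, hγc, hγ⟩ := hgeo x y
  have hcurve : γ '' Icc 0 1 ⊆ Ω := by
    refine (isPreconnected_Icc.image γ hγc).subset_of_closure_inter_subset hΩ
      ⟨γ 0, mem_image_of_mem γ (left_mem_Icc.2 zero_le_one), hx⟩ ?_
    rintro _ ⟨hcl, t, ht, rfl⟩
    by_contra hnot
    have hfront : γ t ∈ frontier Ω := by rw [hΩ.frontier_eq]; exact ⟨hcl, hnot⟩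
    linarith [infDist_le_dist_of_mem (x := γ 0) hfront, dist_add_dist_le_of_eVariationOn_eq hγ ht,
      dist_nonneg (x := γ t) (y := γ 1)]
  exact hcurve (mem_image_of_mem γ (right_mem_Icc.2 zero_le_one))

/-- Follow a geodesic from `x₀` to an almost nearest point of `F` until the distance to `F`
has dropped to `s`. -/
lemma GeodesicSpace.exists_infDist_eq (hgeo : GeodesicSpace X) {F : Set X} (hF : F.Nonempty)
    (x₀ : X) {s ε : ℝ} (hs : 0 ≤ s) (hsx₀ : s ≤ infDist x₀ F) (hε : 0 < ε) :
    ∃ x, infDist x F = s ∧ dist x₀ x + s < infDist x₀ F + ε := by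
  obtain ⟨w, hwF, hw⟩ := (infDist_lt_iff hF).1 (lt_add_of_pos_right (infDist x₀ F) hε)
  obtain ⟨γ, rfl, rfl, hγc, hγ⟩ := hgeo x₀ w
  have hf : ContinuousOn (fun t => infDist (γ t) F) (Icc 0 1) :=
    (continuous_infDist_pt F).comp_continuousOn hγc
  obtain ⟨t, ht, hts⟩ := intermediate_value_Icc' zero_le_one hf
    ⟨(infDist_zero_of_mem hwF).symm ▸ hs, hsx₀⟩
  refine ⟨γ t, hts, ?_⟩
  have hsw : s ≤ dist (γ t) (γ 1) := hts ▸ infDist_le_dist_of_mem hwF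
  linarith [dist_add_dist_le_of_eVariationOn_eq hγ ht]

end Geodesic

end Paper
theorem reduction_to_scale_two_general {X : Type*} [MetricSpace X] (hgeo : Paper.GeodesicSpace X)
    (D : ℝ≥0∞) (hD : 1 ≤ D) (hDt : D < ⊤)
    (ξ : X → ℝ → ℝ≥0∞) (hξ : Paper.DoublingGauge ξ D)
    (Chat : ℝ) (hChat : 1 < Chat) :
    ∃ C' : ℝ≥0∞, 1 ≤ C' ∧ C' < ⊤ ∧
      ∀ (Ω : Set X), IsOpen Ω → IsConnected Ω →
        ∀ δ : ℝ≥0∞, 0 < δ → δ ≤ 1 →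
        (∀ x ∈ Ω, δ * ξ x (Metric.infDist x (frontier Ω)) ≤
          Paper.gaugeContent ξ (Metric.infDist x (frontier Ω))
            (Metric.ball x (Chat * Metric.infDist x (frontier Ω)) \ Ω)) →
        ∀ x₀ ∈ Ω, C'⁻¹ * δ * ξ x₀ (Metric.infDist x₀ (frontier Ω)) ≤
          Paper.gaugeContent ξ (Metric.infDist x₀ (frontier Ω))
            (Metric.ball x₀ (2 * Metric.infDist x₀ (frontier Ω)) \ Ω) := by
  obtain ⟨k, hk⟩ : ∃ k : ℕ, Chat ≤ 2 ^ k := (pow_unbounded_of_one_lt Chat one_lt_two).imp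
    fun _ => le_of_lt
  refine ⟨D ^ (k + 3), one_le_pow₀ hD, pow_lt_top hDt, ?_⟩
  intro Ω hΩ _ δ _ hδ1 hyp x₀ hx₀
  generalize hd₀ : infDist x₀ (frontier Ω) = d₀
  rcases (hd₀ ▸ infDist_nonneg : 0 ≤ d₀).eq_or_lt with rfl | hd₀pos
  · have h := hyp x₀ hx₀
    rw [hd₀, mul_zero] at h
    rw [mul_zero]
    exact (mul_le_mul_left (mul_le_of_le_one_left' (ENNReal.inv_le_one.2 (one_le_pow₀ hD))) _).trans
      h
  obtain ⟨s, rfl⟩ : ∃ s, d₀ = Chat * s := ⟨d₀ / Chat, by field_simp⟩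
  have hs : 0 < s := pos_of_mul_pos_right hd₀pos (by linarith)
  have hFne : (frontier Ω).Nonempty := nonempty_iff_ne_empty.2 fun h => by
    rw [h, infDist_empty] at hd₀; linarith
  obtain ⟨x, hxs, hx⟩ := hgeo.exists_infDist_eq hFne x₀ hs.le (by nlinarith) hs
  rw [hd₀] at hx
  have hxΩ : x ∈ Ω := hgeo.mem_of_dist_lt_infDist_frontier hΩ hx₀ (by linarith)
  have hyp_x := hyp x hxΩ
  rw [hxs] at hyp_x
  exact hξ.inv_pow_mul_le_gaugeContent hD hDt.ne k hs (by nlinarith) (by nlinarith) (by linarith)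
    hδ1 hyp_x

theorem reduction_to_scale_two {X : Type*} [MetricSpace X] [CompleteSpace X]
    [MeasurableSpace X] (hgeo : Paper.GeodesicSpace X) (μ : Measure X)
    (D : ℝ≥0∞) (hD : 1 ≤ D) (hDt : D < ⊤) (hμ : Paper.DoublingMeasure μ D)
    (ξ : X → ℝ → ℝ≥0∞) (hξ : Paper.DoublingGauge ξ D)
    (Chat : ℝ) (hChat : 1 < Chat) :
    ∃ C' : ℝ≥0∞, 1 ≤ C' ∧ C' < ⊤ ∧
      ∀ (Ω : Set X), IsOpen Ω → IsConnected Ω →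
        ∀ δ : ℝ≥0∞, 0 < δ → δ ≤ 1 →
        (∀ x ∈ Ω, δ * ξ x (Metric.infDist x (frontier Ω)) ≤
          Paper.gaugeContent ξ (Metric.infDist x (frontier Ω))
            (Metric.ball x (Chat * Metric.infDist x (frontier Ω)) \ Ω)) →
        ∀ x₀ ∈ Ω, C'⁻¹ * δ * ξ x₀ (Metric.infDist x₀ (frontier Ω)) ≤
          Paper.gaugeContent ξ (Metric.infDist x₀ (frontier Ω))
            (Metric.ball x₀ (2 * Metric.infDist x₀ (frontier Ω)) \ Ω) :=
  reduction_to_scale_two_general hgeo D hD hDt ξ hξ Chat hChat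
end
end
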